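/- arXiv:1908.00864 — 2 statements merged into one kernel-verified Lean document; each statement's English description precedes it below -/
import Mathlib

section
/- Let X be a zero-dimensional Hausdorff space. The ring C(X, ℝ_disc) of continuous locally constant real functions is ℵ₀-self-injective if and only if X is a P-space, i.e., the field CO(X) of clopen sets is closed under countable unions. -/
open Set Function

/-- A topological space is zero-dimensional if it has a basis of clopen sets. -/
def ZeroDimensional (X : Type*) [TopologicalSpace X] : Prop :=
  ∀ x : X, ∀ U : Set X, IsOpen U → x ∈ U → ∃ V : Set X, IsClopen V ∧ x ∈ V ∧ V ⊆ U

/-- A commutative ring `R` is `ℵ₀`-self-injective if every `R`-module homomorphism from a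
countably generated ideal of `R` into `R` extends to a homomorphism `R → R`. -/
def Aleph0SelfInjective (R : Type*) [CommRing R] : Prop :=
  ∀ I : Ideal R, (∃ S : Set R, S.Countable ∧ Ideal.span S = I) →
    ∀ φ : I →ₗ[R] R, ∃ Φ : R →ₗ[R] R, ∀ x : I, Φ (x : R) = φ x

/-!
If `X` is a `P`-space and `I` is generated by `f₀, f₁, …`, the supports of the `fₙ` are clopen,
and so is their union `U`. Disjointifying them gives clopen pieces `Dₙ` whose characteristic
functions lie in `I`, and a homomorphism `φ : I → C(X, ℝ_disc)` is multiplication by the function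
equal to `φ(χ_{Dₙ})` on `Dₙ` and to `0` off `U`, which is locally constant because `U` is clopen.

Conversely, disjointify a sequence of clopen sets into `Dₙ` and let `w` be the function equal to
`n` on `Dₙ` and to `0` elsewhere. Multiplication by `w` maps the ideal generated by the `χ_{Dₙ}`
into `C(X, ℝ_disc)`; an extension of it is multiplication by a locally constant `h` with `h = n`
on `Dₙ`. The fibres of `h` then show that the family `(Dₙ)` is locally finite, so its union is
closed.
-/

open LocallyConstant

theorem isClopen_disjointed {X : Type*} [TopologicalSpace X] {g : ℕ → Set X}
    (hg : ∀ n, IsClopen (g n)) (n : ℕ) : IsClopen (disjointed g n) :=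
  disjointedRec (fun _ i ht => ht.diff (hg i)) (hg n)

theorem locallyFinite_of_isLocallyConstant {X Y ι : Type*} [TopologicalSpace X] {D : ι → Set X}
    {h : X → Y} (hh : IsLocallyConstant h) {v : ι → Y} (hv : Injective v)
    (hD : ∀ i, ∀ x ∈ D i, h x = v i) : LocallyFinite D := by
  intro x
  refine ⟨h ⁻¹' {h x}, (hh.isOpen_fiber (h x)).mem_nhds rfl, Subsingleton.finite ?_⟩
  rintro i ⟨y, hyi, hy⟩ j ⟨z, hzj, hz⟩
  exact hv (by rw [← hD i y hyi, ← hD j z hzj, mem_preimage.1 hy, mem_preimage.1 hz])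

theorem mul_map_comm_of_ideal {R : Type*} [CommRing R] {I : Ideal R} (φ : I →ₗ[R] R) (a b : I) :
    (a : R) * φ b = b * φ a := by
  rw [← smul_eq_mul, ← map_smul, ← smul_eq_mul (b : R), ← map_smul]
  congr 1
  ext
  exact mul_comm _ _

section TsumIndicator

variable {X ι : Type*} {D : ι → Set X}

/-- The function equal to `v i` on `D i` when the `D i` are pairwise disjoint, and to `0` off
`⋃ i, D i`. -/
noncomputable def tsumIndicator (D : ι → Set X) (v : ι → X → ℝ) (x : X) : ℝ :=
  ∑' i, (D i).indicator (v i) x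

theorem tsumIndicator_of_mem (hD : Pairwise (Disjoint on D)) (v : ι → X → ℝ) {i : ι} {x : X}
    (hx : x ∈ D i) : tsumIndicator D v x = v i x := by
  rw [tsumIndicator, tsum_eq_single i fun j hji =>
    indicator_of_notMem (fun hxj => (hD hji).ne_of_mem hxj hx rfl) _, Set.indicator_of_mem hx]

theorem tsumIndicator_of_notMem (v : ι → X → ℝ) {x : X} (hx : x ∉ ⋃ i, D i) :
    tsumIndicator D v x = 0 := by
  simp_all [tsumIndicator]

theorem isLocallyConstant_tsumIndicator [TopologicalSpace X] (hD : ∀ i, IsClopen (D i))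
    (hdisj : Pairwise (Disjoint on D)) (hU : IsClopen (⋃ i, D i)) {v : ι → X → ℝ}
    (hv : ∀ i, IsLocallyConstant (v i)) : IsLocallyConstant (tsumIndicator D v) := by
  refine (IsLocallyConstant.iff_exists_open _).2 fun x => ?_
  by_cases hx : x ∈ ⋃ i, D i
  · obtain ⟨i, hxi⟩ := mem_iUnion.1 hx
    obtain ⟨W, hW, hxW, hWv⟩ := (hv i).exists_open x
    refine ⟨W ∩ D i, hW.inter (hD i).isOpen, ⟨hxW, hxi⟩, fun y hy => ?_⟩
    rw [tsumIndicator_of_mem hdisj v hy.2, tsumIndicator_of_mem hdisj v hxi, hWv y hy.1]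
  · refine ⟨(⋃ i, D i)ᶜ, hU.compl.isOpen, hx, fun y hy => ?_⟩
    rw [tsumIndicator_of_notMem v hy, tsumIndicator_of_notMem v hx]

end TsumIndicator

section LocallyConstantReal

variable {X : Type*} [TopologicalSpace X]

def multiplierIdeal (w : X → ℝ) : Ideal (LocallyConstant X ℝ) where
  carrier := {f | IsLocallyConstant (w * ⇑f)}
  add_mem' {f g} hf hg := by simpa [mul_add] using hf.add hg
  zero_mem' := by simpa using IsLocallyConstant.zero
  smul_mem' c f hf := by simpa [mul_left_comm] using c.isLocallyConstant.mul hf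

def multiplierIdeal.lmul (w : X → ℝ) :
    multiplierIdeal w →ₗ[LocallyConstant X ℝ] LocallyConstant X ℝ where
  toFun f := ⟨w * ⇑(f : LocallyConstant X ℝ), f.2⟩
  map_add' f g := by ext x; exact mul_add _ _ _
  map_smul' c f := by ext x; exact mul_left_comm _ _ _

@[simp]
theorem multiplierIdeal.coe_lmul (w : X → ℝ) (f : multiplierIdeal w) :
    ⇑(multiplierIdeal.lmul w f) = w * ⇑(f : LocallyConstant X ℝ) :=
  rfl

theorem Aleph0SelfInjective.isClosed_iUnion (hR : Aleph0SelfInjective (LocallyConstant X ℝ))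
    {D : ℕ → Set X} (hD : ∀ n, IsClopen (D n)) (hdisj : Pairwise (Disjoint on D)) :
    IsClosed (⋃ n, D n) := by
  set e : ℕ → LocallyConstant X ℝ := fun n => charFn ℝ (hD n)
  set w : X → ℝ := tsumIndicator D fun n _ => n
  have hwe : ∀ n, w * ⇑(e n) = (fun t => (n : ℝ) * t) ∘ e n := fun n => by
    funext x
    by_cases hx : x ∈ D n
    · simp [w, e, coe_charFn, hx, tsumIndicator_of_mem hdisj _ hx]
    · simp [e, coe_charFn, hx]
  have hle : Ideal.span (range e) ≤ multiplierIdeal w :=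
    Ideal.span_le.2 <| range_subset_iff.2 fun n =>
      show IsLocallyConstant (w * ⇑(e n)) from hwe n ▸ (e n).isLocallyConstant.comp _
  obtain ⟨Φ, hΦ⟩ := hR _ ⟨range e, countable_range e, rfl⟩
    ((multiplierIdeal.lmul w).comp (Submodule.inclusion hle))
  have hΦD : ∀ n, ∀ x ∈ D n, Φ 1 x = n := by
    intro n x hx
    have hΦe : Φ (e n) = e n * Φ 1 := by rw [← smul_eq_mul, ← map_smul, smul_eq_mul, mul_one]
    have hΦx := congrArg (· x) (hΦ ⟨e n, Ideal.subset_span (mem_range_self n)⟩)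
    simp only [hΦe] at hΦx
    simpa [e, w, coe_charFn, hx, tsumIndicator_of_mem hdisj _ hx] using hΦx
  exact (locallyFinite_of_isLocallyConstant (Φ 1).isLocallyConstant Nat.cast_injective
    hΦD).isClosed_iUnion fun n => (hD n).isClosed

theorem exists_extension_of_clopen_partition {I : Ideal (LocallyConstant X ℝ)} {D : ℕ → Set X}
    (hD : ∀ n, IsClopen (D n)) (hdisj : Pairwise (Disjoint on D)) (hU : IsClopen (⋃ n, D n))
    (hDI : ∀ n, charFn ℝ (hD n) ∈ I) (hIU : ∀ f ∈ I, ∀ x ∉ ⋃ n, D n, f x = 0)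
    (φ : I →ₗ[LocallyConstant X ℝ] LocallyConstant X ℝ) :
    ∃ Φ : LocallyConstant X ℝ →ₗ[LocallyConstant X ℝ] LocallyConstant X ℝ,
      ∀ f : I, Φ f = φ f := by
  set e : ℕ → I := fun n => ⟨charFn ℝ (hD n), hDI n⟩
  set F : LocallyConstant X ℝ := ⟨tsumIndicator D fun n => φ (e n),
    isLocallyConstant_tsumIndicator hD hdisj hU fun n => (φ (e n)).isLocallyConstant⟩
  refine ⟨LinearMap.mulLeft _ F, fun f => ?_⟩
  ext x
  by_cases hx : x ∈ ⋃ n, D n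
  · obtain ⟨n, hxn⟩ := mem_iUnion.1 hx
    have hcomm := congrArg (· x) (mul_map_comm_of_ideal φ (e n) f)
    simp [e, F, coe_charFn, hxn, tsumIndicator_of_mem hdisj _ hxn] at hcomm ⊢
    rw [hcomm, mul_comm]
  · have hUc : charFn ℝ hU.compl • f = 0 := by
      ext y
      by_cases hy : y ∈ ⋃ n, D n
      · simp [coe_charFn, mem_iUnion.1 hy]
      · simp [hIU f f.2 y hy]
    have h0 : charFn ℝ hU.compl * φ f = 0 := by rw [← smul_eq_mul, ← map_smul, hUc, map_zero]
    have hφx := congrArg (· x) h0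
    simp [coe_charFn, mem_iUnion.not.1 hx] at hφx
    simp [F, tsumIndicator_of_notMem _ hx, hφx]

theorem aleph0SelfInjective_of_isClopen_iUnion
    (hP : ∀ g : ℕ → Set X, (∀ n, IsClopen (g n)) → IsClopen (⋃ n, g n)) :
    Aleph0SelfInjective (LocallyConstant X ℝ) := by
  rintro I ⟨S, hS, rfl⟩ φ
  obtain ⟨f, hf⟩ := (hS.insert 0).exists_eq_range (insert_nonempty 0 S)
  have hspan : Ideal.span S = Ideal.span (range f) := by
    rw [← hf, Ideal.span_insert_zero]
  have hsupp : ∀ n, IsClopen (support (f n)) := fun n =>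
    ((f n).isLocallyConstant.isClopen_fiber 0).compl
  have hD := isClopen_disjointed hsupp
  refine exists_extension_of_clopen_partition hD (disjoint_disjointed _)
    (iUnion_disjointed (f := fun n => support (f n)) ▸ hP _ hsupp) (fun n => ?_)
    (fun g hg x hx => ?_) φ
  · have hχ : charFn ℝ (hD n) = charFn ℝ (hD n) * (f n)⁻¹ * f n := by
      ext x
      by_cases hx : x ∈ disjointed (fun n => support (f n)) n
      · have hfx : f n x ≠ 0 := disjointed_subset _ n hx
        simp [coe_charFn, hx, hfx]
      · simp [coe_charFn, hx]
    rw [hχ, hspan]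
    exact Ideal.mul_mem_left _ _ (Ideal.subset_span (mem_range_self n))
  · rw [iUnion_disjointed] at hx
    have hker : Ideal.span S ≤ RingHom.ker (evalRingHom x) := by
      rw [hspan, Ideal.span_le, range_subset_iff]
      simpa using hx
    simpa using hker hg

end LocallyConstantReal

theorem stmt13_general (X : Type*) [TopologicalSpace X] :
    Aleph0SelfInjective (LocallyConstant X ℝ) ↔
      ∀ g : ℕ → Set X, (∀ n, IsClopen (g n)) → IsClopen (⋃ n, g n) := by
  refine ⟨fun hR g hg => ?_, aleph0SelfInjective_of_isClopen_iUnion⟩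
  rw [← iUnion_disjointed]
  exact ⟨hR.isClosed_iUnion (isClopen_disjointed hg) (disjoint_disjointed g),
    isOpen_iUnion fun n => (isClopen_disjointed hg n).isOpen⟩

/-- For a zero-dimensional Hausdorff space `X`, the ring `C(X, ℝ_disc)` of continuous locally
constant real functions is `ℵ₀`-self-injective if and only if `X` is a `P`-space, i.e. the
clopen sets are closed under countable unions. -/
theorem stmt13 (X : Type*) [TopologicalSpace X] [T2Space X] (hzd : ZeroDimensional X) :
    Aleph0SelfInjective (LocallyConstant X ℝ) ↔
      ∀ g : ℕ → Set X, (∀ n, IsClopen (g n)) → IsClopen (⋃ n, g n) :=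
  stmt13_general X
end

section
/- Let X be a zero-dimensional Hausdorff space, 𝕀(X) its set of isolated points, and M_A^d = {f ∈ C(X, ℝ_disc) : f(x) = 0 for all x ∈ A}. Then C_F(X) = M_{X∖𝕀(X)}^d if and only if every infinite subset of 𝕀(X) has a limit point in X. -/
open Set Function

/-- For a zero-dimensional Hausdorff space `X` with isolated points `𝕀(X)`, the ideal
`C_F(X)` of continuous locally constant functions with finite support equals
`M^d_{X∖𝕀(X)}`, the ideal of those functions vanishing on all non-isolated points, if and
only if every infinite subset of `𝕀(X)` has a limit point in `X`. -/
theorem stmt18 (X : Type*) [TopologicalSpace X] [T2Space X] (hzd : ZeroDimensional X) :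
    ({f : X → ℝ | IsLocallyConstant f ∧ (support f).Finite} =
      {f : X → ℝ | IsLocallyConstant f ∧ ∀ x : X, ¬IsOpen ({x} : Set X) → f x = 0}) ↔
    ∀ S : Set X, S.Infinite → (∀ x ∈ S, IsOpen ({x} : Set X)) →
      ∃ p : X, p ∈ closure (S \ {p}) := by
  constructor
  · intro h S hSinf hSiso
    by_contra hno
    push_neg at hno
    set f : X → ℝ := S.indicator 1 with hf
    have hlc : IsLocallyConstant f := by
      rw [IsLocallyConstant.iff_exists_open]
      intro x
      by_cases hx : x ∈ S
      · exact ⟨{x}, hSiso x hx, rfl, by rintro y rfl; rfl⟩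
      · have hxc : x ∉ closure S := by
          have := hno x
          rwa [Set.diff_singleton_eq_self hx] at this
        refine ⟨(closure S)ᶜ, isClosed_closure.isOpen_compl, hxc, fun y hy => ?_⟩
        have hyS : y ∉ S := fun hyS => hy (subset_closure hyS)
        simp [hf, Set.indicator_of_notMem hyS, Set.indicator_of_notMem hx]
    have hmem : f ∈ {f : X → ℝ | IsLocallyConstant f ∧
        ∀ x : X, ¬IsOpen ({x} : Set X) → f x = 0} := by
      refine ⟨hlc, fun x hx => ?_⟩
      exact Set.indicator_of_notMem (fun hxS => hx (hSiso x hxS)) 1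
    rw [← h] at hmem
    have hsupp : support f = S := by
      rw [hf, Set.support_indicator, Function.support_one, Set.inter_univ]
    exact hSinf (hsupp ▸ hmem.2)
  · intro h
    ext f
    simp only [mem_setOf_eq]
    constructor
    · rintro ⟨hlc, hfin⟩
      refine ⟨hlc, fun x hx => ?_⟩
      by_contra hne
      obtain ⟨U, hUo, hxU, hU⟩ := (IsLocallyConstant.iff_exists_open f).mp hlc x
      have hUs : U ⊆ support f := fun y hy => by simp [hU y hy, hne]
      have hUfin : U.Finite := hfin.subset hUs
      apply hx
      have heq : ({x} : Set X) = U \ (U \ {x}) := by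
        ext y
        simp only [mem_singleton_iff, mem_diff, not_and, not_not]
        constructor
        · rintro rfl; exact ⟨hxU, fun _ => rfl⟩
        · rintro ⟨hyU, h2⟩; exact h2 hyU
      rw [heq]
      exact hUo.sdiff ((hUfin.diff).isClosed)
    · rintro ⟨hlc, hz⟩
      refine ⟨hlc, ?_⟩
      by_contra hinf
      have hinf' : (support f).Infinite := hinf
      have hiso : ∀ x ∈ support f, IsOpen ({x} : Set X) := by
        intro x hx
        by_contra hno
        exact hx (hz x hno)
      obtain ⟨p, hp⟩ := h (support f) hinf' hiso
      by_cases hfp : f p = 0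
      · obtain ⟨U, hUo, hxU, hU⟩ := (IsLocallyConstant.iff_exists_open f).mp hlc p
        obtain ⟨y, hyU, hyS, -⟩ := mem_closure_iff.mp hp U hUo hxU
        exact hyS (by rw [hU y hyU, hfp])
      · have hpS : p ∈ support f := hfp
        obtain ⟨y, hy, -, hyne⟩ := mem_closure_iff.mp hp {p} (hiso p hpS) rfl
        exact hyne hy
end
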